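/- Let p ≥ 1 and φ : ℤ → ℕ → ℝ with φ t j = 0 for all j > p. Assume there exists ε ∈ (0,1) such that for every t ∈ ℤ: φ t 0 > 0, φ (t+p) p ≥ 0, and φ (t+j) j ≤ ε · φ (t+j−1) (j−1) for every j with 1 ≤ j ≤ p (so in particular φ t 0 > φ (t+1) 1 > ⋯ > φ (t+p) p ≥ 0 whenever the intermediate values are positive). Then φ has a left inverse with absolutely summable coefficients: there exists θ : ℤ → ℕ → ℝ such that ∑_{i=0}^{∞} |θ t i| < ∞ for every t, and for all t ∈ ℤ and all i ∈ ℕ, ∑_{j=0}^{min(p,i)} θ t (i−j) · φ (t−i+j) j equals 1 when i = 0 and equals 0 when i ≥ 1. -/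

import Mathlib

open Finset

/-! Normalising row `i` of the operator at time `t` by its leading coefficient gives lag weights
`a i j` with `a i 0 = 1` and `0 ≤ a i (j + 1) ≤ ε * a i j`. Multiplying by `1 - ε L` turns the row
into `1 - ∑_{l ≥ 1} c i l Lˡ` where `c ≥ 0` has total mass at most `ε` on the lags `1, …, p + 1`
(the Eneström–Kakeya trick). Its left inverse solves a renewal equation with such a kernel, so it
is nonnegative and bounded by `ρ ^ n` with `ρ ^ (p + 1) = ε`; composing with `1 - ε L` gives a left
inverse of the original operator with geometrically decaying coefficients. -/

namespace TimeVaryingLag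

noncomputable def renewal (c : ℕ → ℕ → ℝ) : ℕ → ℝ
  | 0 => 1
  | n + 1 => ∑ k : Fin (n + 1), renewal c k * c (n + 1) (n - k + 1)

theorem renewal_zero (c : ℕ → ℕ → ℝ) : renewal c 0 = 1 := by
  rw [renewal]

theorem renewal_succ (c : ℕ → ℕ → ℝ) (n : ℕ) :
    renewal c (n + 1) = ∑ kl ∈ antidiagonal n, renewal c kl.1 * c (n + 1) (kl.2 + 1) := by
  rw [renewal, Fin.sum_univ_eq_sum_range (fun k => renewal c k * c (n + 1) (n - k + 1)),
    Nat.sum_antidiagonal_eq_sum_range_succ (fun k l => renewal c k * c (n + 1) (l + 1))]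

theorem sum_antidiagonal_snd_eq_sum_range {M : Type*} [AddCommMonoid M] (f : ℕ → M) (n : ℕ) :
    ∑ kl ∈ antidiagonal n, f kl.2 = ∑ l ∈ range (n + 1), f l := by
  rw [← Nat.sum_antidiagonal_swap, Nat.sum_antidiagonal_eq_sum_range_succ_mk]
  rfl

theorem renewal_nonneg_and_le_pow {c : ℕ → ℕ → ℝ} {ρ : ℝ} {q : ℕ} (hρ0 : 0 ≤ ρ) (hρ1 : ρ ≤ 1)
    (hc : ∀ m l, 0 ≤ c m (l + 1)) (hc_top : ∀ m l, q ≤ l → c m (l + 1) = 0)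
    (hc_sum : ∀ n, ∑ l ∈ range (n + 1), c (n + 1) (l + 1) ≤ ρ ^ q) :
    ∀ n, 0 ≤ renewal c n ∧ renewal c n ≤ ρ ^ n := by
  intro n
  induction n using Nat.strong_induction_on with
  | _ n ih =>
    rcases n with _ | n
    · simp [renewal_zero]
    have hle : ∀ kl ∈ antidiagonal n, renewal c kl.1 * c (n + 1) (kl.2 + 1)
        ≤ ρ ^ (n + 1 - q) * c (n + 1) (kl.2 + 1) := by
      rintro ⟨k, l⟩ hkl
      rw [HasAntidiagonal.mem_antidiagonal] at hkl
      by_cases hl : q ≤ l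
      · simp [hc_top _ _ hl]
      · refine mul_le_mul_of_nonneg_right ?_ (hc _ _)
        exact (ih k (by omega)).2.trans (pow_le_pow_of_le_one hρ0 hρ1 (by omega))
    rw [renewal_succ]
    refine ⟨sum_nonneg fun kl hkl => mul_nonneg (ih kl.1 ?_).1 (hc _ _), ?_⟩
    · rw [HasAntidiagonal.mem_antidiagonal] at hkl
      omega
    calc ∑ kl ∈ antidiagonal n, renewal c kl.1 * c (n + 1) (kl.2 + 1)
        ≤ ρ ^ (n + 1 - q) * ∑ l ∈ range (n + 1), c (n + 1) (l + 1) := by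
          rw [mul_sum, ← sum_antidiagonal_snd_eq_sum_range]
          exact sum_le_sum hle
      _ ≤ ρ ^ (n + 1 - q) * ρ ^ q := by gcongr; exact hc_sum n
      _ ≤ ρ ^ (n + 1) := by
          rw [← pow_add]
          exact pow_le_pow_of_le_one hρ0 hρ1 (by omega)

-- `-(1 - ε L)` applied to row `m`, at lag `l ≥ 1`; the value at `l = 0` is never used
def dampedKernel (ε : ℝ) (a : ℕ → ℕ → ℝ) (m l : ℕ) : ℝ :=
  ε * a m (l - 1) - a m l

noncomputable def leftInverseCoeff (ε : ℝ) (a : ℕ → ℕ → ℝ) : ℕ → ℝ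
  | 0 => 1
  | k + 1 => renewal (dampedKernel ε a) (k + 1) - ε * renewal (dampedKernel ε a) k

section

variable {ε : ℝ} {a : ℕ → ℕ → ℝ}

theorem sum_antidiagonal_leftInverseCoeff_mul (b : ℕ → ℝ) (n : ℕ) :
    ∑ kl ∈ antidiagonal (n + 1), leftInverseCoeff ε a kl.1 * b kl.2 =
      ∑ kl ∈ antidiagonal (n + 1), renewal (dampedKernel ε a) kl.1 * b kl.2 -
        ε * ∑ kl ∈ antidiagonal n, renewal (dampedKernel ε a) kl.1 * b kl.2 := by
  rw [Nat.sum_antidiagonal_succ, Nat.sum_antidiagonal_succ]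
  simp only [leftInverseCoeff, renewal_zero, sub_mul, sum_sub_distrib, mul_sum, mul_assoc]
  ring

theorem sum_antidiagonal_leftInverseCoeff_mul_self (ha0 : ∀ i, a i 0 = 1) (i : ℕ) :
    ∑ kl ∈ antidiagonal i, leftInverseCoeff ε a kl.1 * a i kl.2 = if i = 0 then 1 else 0 := by
  rcases i with _ | n
  · simp [leftInverseCoeff, ha0]
  rw [sum_antidiagonal_leftInverseCoeff_mul, Nat.sum_antidiagonal_succ', renewal_succ]
  simp only [dampedKernel, ha0, Nat.add_sub_cancel, mul_sub, sum_sub_distrib, mul_sum]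
  simp only [mul_one, Nat.add_one_ne_zero, if_false, mul_left_comm (renewal _ _) ε]
  ring

theorem dampedKernel_succ_nonneg (ha_step : ∀ i j, a i (j + 1) ≤ ε * a i j) (m l : ℕ) :
    0 ≤ dampedKernel ε a m (l + 1) :=
  sub_nonneg.mpr (ha_step m l)

theorem dampedKernel_succ_eq_zero {p : ℕ} (ha_top : ∀ i j, p < j → a i j = 0) {m l : ℕ}
    (hl : p + 1 ≤ l) : dampedKernel ε a m (l + 1) = 0 := by
  simp [dampedKernel, ha_top m l (by omega), ha_top m (l + 1) (by omega)]

theorem sum_range_dampedKernel_succ_le (hε0 : 0 ≤ ε) (hε1 : ε ≤ 1) (ha0 : ∀ i, a i 0 = 1)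
    (ha_nonneg : ∀ i j, 0 ≤ a i j) (m n : ℕ) :
    ∑ l ∈ range n, dampedKernel ε a m (l + 1) ≤ ε := by
  suffices h : ∑ l ∈ range n, dampedKernel ε a m (l + 1) + ε * a m n ≤ ε by
    linarith [mul_nonneg hε0 (ha_nonneg m n)]
  induction n with
  | zero => simp [ha0]
  | succ n ih =>
    rw [sum_range_succ, dampedKernel, Nat.add_sub_cancel]
    linarith [mul_nonneg (sub_nonneg.mpr hε1) (ha_nonneg m (n + 1))]

theorem summable_abs_leftInverseCoeff {p : ℕ} (hε0 : 0 ≤ ε) (hε1 : ε < 1)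
    (ha0 : ∀ i, a i 0 = 1) (ha_nonneg : ∀ i j, 0 ≤ a i j)
    (ha_step : ∀ i j, a i (j + 1) ≤ ε * a i j) (ha_top : ∀ i j, p < j → a i j = 0) :
    Summable fun k => |leftInverseCoeff ε a k| := by
  -- the kernel has mass at most `ε` on lags `1, …, p + 1`, so `ρ` is the decay rate of `renewal`
  set ρ : ℝ := ε ^ ((p + 1 : ℕ) : ℝ)⁻¹
  have hρ0 : 0 ≤ ρ := Real.rpow_nonneg hε0 _
  have hρ1 : ρ < 1 := Real.rpow_lt_one hε0 hε1 (by positivity)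
  have hρp : ρ ^ (p + 1) = ε := Real.rpow_inv_natCast_pow hε0 (Nat.succ_ne_zero p)
  have hy := renewal_nonneg_and_le_pow hρ0 hρ1.le (dampedKernel_succ_nonneg ha_step)
    (fun _ _ => dampedKernel_succ_eq_zero ha_top)
    (fun n => by rw [hρp]; exact sum_range_dampedKernel_succ_le hε0 hε1.le ha0 ha_nonneg _ _)
  have hbound : ∀ k, |leftInverseCoeff ε a (k + 1)| ≤ ρ ^ k := fun k =>
    abs_sub_le_of_nonneg_of_le (hy (k + 1)).1
      ((hy (k + 1)).2.trans (pow_le_pow_of_le_one hρ0 hρ1.le k.le_succ))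
      (mul_nonneg hε0 (hy k).1) ((mul_le_of_le_one_left (hy k).1 hε1.le).trans (hy k).2)
  exact (summable_nat_add_iff 1).mp <|
    (summable_geometric_of_lt_one hρ0 hρ1).of_nonneg_of_le (fun _ => abs_nonneg _) hbound

end

section

variable {p : ℕ} {φ : ℤ → ℕ → ℝ} {ε : ℝ}

theorem diag_succ_le_of_lt
    (hratio : ∀ (t : ℤ) (j : ℕ), 1 ≤ j → j ≤ p → φ (t + j) j ≤ ε * φ (t + j - 1) (j - 1))
    (s : ℤ) {j : ℕ} (hj : j < p) : φ (s + j + 1) (j + 1) ≤ ε * φ (s + j) j := by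
  simpa [← add_assoc] using hratio s (j + 1) (by omega) hj

theorem diag_nonneg (hε0 : 0 < ε) (hlast : ∀ t : ℤ, 0 ≤ φ (t + p) p)
    (hφp : ∀ (t : ℤ) (j : ℕ), p < j → φ t j = 0)
    (hratio : ∀ (t : ℤ) (j : ℕ), 1 ≤ j → j ≤ p → φ (t + j) j ≤ ε * φ (t + j - 1) (j - 1))
    (s : ℤ) (j : ℕ) : 0 ≤ φ (s + j) j := by
  rcases lt_or_ge p j with hj | hj
  · rw [hφp _ _ hj]
  obtain ⟨d, hd⟩ := Nat.exists_eq_add_of_le hj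
  induction d generalizing j with
  | zero => simpa [hd] using hlast s
  | succ d ih =>
    have hnext : 0 ≤ φ (s + j + 1) (j + 1) := by
      simpa [← add_assoc] using ih (j + 1) (by omega) (by omega)
    exact nonneg_of_mul_nonneg_right (hnext.trans (diag_succ_le_of_lt hratio s (by omega))) hε0

theorem diag_succ_le (hε0 : 0 < ε) (hlast : ∀ t : ℤ, 0 ≤ φ (t + p) p)
    (hφp : ∀ (t : ℤ) (j : ℕ), p < j → φ t j = 0)
    (hratio : ∀ (t : ℤ) (j : ℕ), 1 ≤ j → j ≤ p → φ (t + j) j ≤ ε * φ (t + j - 1) (j - 1))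
    (s : ℤ) (j : ℕ) : φ (s + j + 1) (j + 1) ≤ ε * φ (s + j) j := by
  rcases lt_or_ge j p with hj | hj
  · exact diag_succ_le_of_lt hratio s hj
  · rw [hφp _ _ (by omega)]
    exact mul_nonneg hε0.le (diag_nonneg hε0 hlast hφp hratio s j)

noncomputable def normalizedCoeff (φ : ℤ → ℕ → ℝ) (t : ℤ) (i j : ℕ) : ℝ :=
  φ (t - i + j) j / φ (t - i) 0

theorem sum_range_min_div_mul_eq (hφ0 : ∀ t, φ t 0 ≠ 0)
    (hφp : ∀ (t : ℤ) (j : ℕ), p < j → φ t j = 0) (x : ℕ → ℝ) (t : ℤ) (i : ℕ) :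
    ∑ j ∈ range (min p i + 1), x (i - j) / φ t 0 * φ (t - i + j) j =
      φ (t - i) 0 / φ t 0 * ∑ kl ∈ antidiagonal i, x kl.1 * normalizedCoeff φ t i kl.2 := by
  calc ∑ j ∈ range (min p i + 1), x (i - j) / φ t 0 * φ (t - i + j) j
      = ∑ j ∈ range (i + 1), x (i - j) / φ t 0 * φ (t - i + j) j := by
        refine sum_subset (range_subset_range.mpr (by omega)) fun j hi hp => ?_
        rw [mem_range] at hi hp
        rw [hφp (t - i + j) j (by omega), mul_zero]
    _ = _ := by
        rw [← Nat.sum_antidiagonal_swap, Nat.sum_antidiagonal_eq_sum_range_succ_mk, mul_sum]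
        refine sum_congr rfl fun j _ => ?_
        simp only [Prod.swap_prod_mk, normalizedCoeff]
        field_simp [hφ0]

end

end TimeVaryingLag

open TimeVaryingLag in
theorem stmt_5 (p : ℕ)
    (φ : ℤ → ℕ → ℝ) (hφp : ∀ (t : ℤ) (j : ℕ), p < j → φ t j = 0)
    (ε : ℝ) (hε0 : 0 < ε) (hε1 : ε < 1)
    (hpos : ∀ t : ℤ, 0 < φ t 0)
    (hlast : ∀ t : ℤ, 0 ≤ φ (t + p) p)
    (hratio : ∀ (t : ℤ) (j : ℕ), 1 ≤ j → j ≤ p →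
      φ (t + j) j ≤ ε * φ (t + j - 1) (j - 1)) :
    ∃ θ : ℤ → ℕ → ℝ,
      (∀ t : ℤ, Summable fun i => |θ t i|) ∧
      (∀ (t : ℤ) (i : ℕ),
        ∑ j ∈ Finset.range (min p i + 1), θ t (i - j) * φ (t - i + j) j =
          if i = 0 then 1 else 0) := by
  have hφ0 : ∀ t, φ t 0 ≠ 0 := fun t => (hpos t).ne'
  have ha0 : ∀ t i, normalizedCoeff φ t i 0 = 1 := fun t i => by
    simp [normalizedCoeff, hφ0]
  have ha_nonneg : ∀ t i j, 0 ≤ normalizedCoeff φ t i j := fun t i j =>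
    div_nonneg (diag_nonneg hε0 hlast hφp hratio _ _) (hpos _).le
  have ha_step : ∀ t i j, normalizedCoeff φ t i (j + 1) ≤ ε * normalizedCoeff φ t i j :=
    fun t i j => by
      rw [normalizedCoeff, normalizedCoeff, mul_div_assoc', div_le_div_iff_of_pos_right (hpos _),
        Nat.cast_succ, ← add_assoc]
      exact diag_succ_le hε0 hlast hφp hratio _ _
  have ha_top : ∀ t i j, p < j → normalizedCoeff φ t i j = 0 := fun t i j hj => by
    simp [normalizedCoeff, hφp _ _ hj]
  refine ⟨fun t i => leftInverseCoeff ε (normalizedCoeff φ t) i / φ t 0, fun t => ?_, fun t i => ?_⟩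
  · simp_rw [abs_div]
    exact (summable_abs_leftInverseCoeff hε0.le hε1 (ha0 t) (ha_nonneg t) (ha_step t)
      (ha_top t)).div_const _
  · rw [sum_range_min_div_mul_eq hφ0 hφp, sum_antidiagonal_leftInverseCoeff_mul_self (ha0 t)]
    split_ifs with hi
    · simp [hi, hφ0]
    · rw [mul_zero]
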